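/- arXiv:1804.06006 — 4 statements merged into one kernel-verified Lean document; each statement's English description precedes it below -/
import Mathlib

section
/- For every n ≥ 3, the first resonance variety of the upper McCool group decomposes as R_1 = ⋃_{2 ≤ j < i ≤ n} L_{ij}; that is, a vector a ∈ V satisfies a ∈ R_1 if and only if a lies in one of the linear subspaces L_{ij} with 2 ≤ j < i ≤ n. -/
/-- Index set for the basis `{u_{ij} : 1 ≤ j < i ≤ n}` (`0`-indexed). -/
abbrev RIdx (n : ℕ) := { p : Fin n × Fin n // p.2 < p.1 }

/-- `V = H¹(PΣₙ⁺;ℂ)`, the `ℂ`-vector space with basis `{u_{ij} : j < i}`. -/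
abbrev Vn (n : ℕ) := RIdx n → ℂ

/-- The basis vector `u_{ij}` (for `j < i`). -/
noncomputable def u (n : ℕ) (i j : Fin n) (h : j < i) : Vn n := Pi.single ⟨(i, j), h⟩ 1

/-- The wedge `a ∧ b`, viewed inside the exterior algebra `Λ(V)`. -/
noncomputable def wedge (n : ℕ) (a b : Vn n) : ExteriorAlgebra ℂ (Vn n) :=
  ExteriorAlgebra.ι ℂ a * ExteriorAlgebra.ι ℂ b

/-- The span `R ⊆ Λ²V` of the degree-2 relations `u_{ij} ∧ (u_{ik} − u_{jk})`
(`k < j < i`) of the cohomology ring of `PΣₙ⁺`. -/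
noncomputable def ResRel (n : ℕ) : Submodule ℂ (ExteriorAlgebra ℂ (Vn n)) :=
  Submodule.span ℂ { w | ∃ (i j k : Fin n) (hkj : k < j) (hji : j < i),
    w = wedge n (u n i j hji) (u n i k (hkj.trans hji) - u n j k hkj) }

/-- The first resonance variety `R₁ = {a ∈ V : ∃ b ∉ ℂ·a, a ∧ b ∈ R}`. -/
noncomputable def R1 (n : ℕ) : Set (Vn n) :=
  { a | ∃ b : Vn n, b ∉ Submodule.span ℂ {a} ∧ wedge n a b ∈ ResRel n }

/-- The linear subspace `L_{ij} ⊆ V` (for `j < i`) cut out by the equations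
`x_{il} + x_{jl} = 0` (`l < j`), `x_{il} = 0` (`j < l < i`), and `x_{st} = 0`
(`t < s`, `s ∉ {i,j}`). -/
noncomputable def L (n : ℕ) (i j : Fin n) (hji : j < i) : Submodule ℂ (Vn n) where
  carrier := { a |
    (∀ (l : Fin n) (h : l < j), a ⟨(i, l), h.trans hji⟩ + a ⟨(j, l), h⟩ = 0) ∧
    (∀ (l : Fin n) (h1 : j < l) (h2 : l < i), a ⟨(i, l), h2⟩ = 0) ∧
    (∀ (s t : Fin n) (h : t < s), s ≠ i → s ≠ j → a ⟨(s, t), h⟩ = 0) }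
  zero_mem' := by
    refine ⟨fun l h => ?_, fun l h1 h2 => ?_, fun s t h hs1 hs2 => ?_⟩ <;> simp
  add_mem' := by
    rintro a b ⟨ha1, ha2, ha3⟩ ⟨hb1, hb2, hb3⟩
    refine ⟨fun l h => ?_, fun l h1 h2 => ?_, fun s t h hs1 hs2 => ?_⟩
    · have h1 := ha1 l h; have h2 := hb1 l h
      simp only [Pi.add_apply]
      linear_combination h1 + h2
    · simp only [Pi.add_apply, ha2 l h1 h2, hb2 l h1 h2, add_zero]
    · simp only [Pi.add_apply, ha3 s t h hs1 hs2, hb3 s t h hs1 hs2, add_zero]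
  smul_mem' := by
    rintro c a ⟨ha1, ha2, ha3⟩
    refine ⟨fun l h => ?_, fun l h1 h2 => ?_, fun s t h hs1 hs2 => ?_⟩
    · have h1 := ha1 l h
      simp only [Pi.smul_apply, smul_eq_mul]
      linear_combination c * h1
    · simp only [Pi.smul_apply, ha2 l h1 h2, smul_zero]
    · simp only [Pi.smul_apply, ha3 s t h hs1 hs2, smul_zero]

/-! Read `a ∧ b` through its Plücker coordinates `[p q] = a_p b_q - a_q b_p`. Every element of `R`
satisfies two families of linear conditions on them: `[p q] = 0` unless `p` and `q` share their
first index or the second index of one is the first index of the other, and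
`[ij ik] + [ij jk] = 0`. If `a ≠ 0` and `b ∉ ℂ a`, these conditions force some `[IJ IK]` with
`K < J < I` to be nonzero, so `(a_{IJ}, b_{IJ})` and `(a_{IK}, b_{IK})` span `ℂ²`; every other pair
`(a_p, b_p)` is then determined by its two determinants against them, and those give exactly the
equations of `L_{IJ}`. Conversely, a point of `L_{IJ}` is `c u_{IJ} + w` with `w` in the span of
the `u_{Il} - u_{Jl}` (`l < J`), and `u_{IJ} ∧ w ∈ R`: take `b = u_{IJ}`, or `b = u_{I1} - u_{J1}`
when `a ∈ ℂ u_{IJ}`. -/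

namespace ExteriorAlgebra

variable {R M : Type*} [CommRing R] [AddCommGroup M] [Module R M]

noncomputable def bivectorCoeff (f g : Module.Dual R M) : ExteriorAlgebra R M →ₗ[R] R :=
  algebraMapInv.toLinearMap ∘ₗ CliffordAlgebra.contractLeft g ∘ₗ CliffordAlgebra.contractLeft f

theorem bivectorCoeff_ι_mul_ι (f g : Module.Dual R M) (a b : M) :
    bivectorCoeff f g (ι R a * ι R b) = f a * g b - g a * f b := by
  simp [bivectorCoeff, ι, CliffordAlgebra.contractLeft_ι_mul, CliffordAlgebra.contractLeft_ι]

theorem exists_ι_mul_ι_mem_of_mem_sup {K V : Type*} [Field K] [AddCommGroup V] [Module K V]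
    {N : Submodule K (ExteriorAlgebra K V)} {u w : V} {W : Submodule K V}
    (hu : u ≠ 0) (hW : ∀ x ∈ W, ι K u * ι K x ∈ N) (hw : w ∈ W) (hwu : w ∉ K ∙ u)
    {a : V} (ha : a ∈ (K ∙ u) ⊔ W) : ∃ b ∉ K ∙ a, ι K a * ι K b ∈ N := by
  obtain ⟨_, hc, x, hx, rfl⟩ := Submodule.mem_sup.1 ha
  obtain ⟨c, rfl⟩ := Submodule.mem_span_singleton.1 hc
  by_cases hau : c • u + x ∈ K ∙ u
  · obtain ⟨d, hd⟩ := Submodule.mem_span_singleton.1 hau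
    refine ⟨w, fun h => hwu (Submodule.mem_span_singleton_trans h hau), ?_⟩
    rw [← hd, map_smul, smul_mul_assoc]
    exact N.smul_mem d (hW w hw)
  · refine ⟨u, fun h => hau ?_, ?_⟩
    · obtain ⟨d, hd⟩ := Submodule.mem_span_singleton.1 h
      have hd0 : d ≠ 0 := by rintro rfl; exact hu (by simpa using hd.symm)
      exact Submodule.mem_span_singleton.2 ⟨d⁻¹, (inv_smul_eq_iff₀ hd0).2 hd.symm⟩
    · have hswap : ι K x * ι K u = -(ι K u * ι K x) :=
        eq_neg_of_add_eq_zero_left (ι_add_mul_swap x u)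
      rw [map_add, map_smul, add_mul, smul_mul_assoc, ι_sq_zero, smul_zero, zero_add, hswap]
      exact N.neg_mem (hW x hx)

end ExteriorAlgebra

section Minor

variable {ι K : Type*}

def minor [CommRing K] (a b : ι → K) (p q : ι) : K := a p * b q - a q * b p

theorem minor_swap [CommRing K] (a b : ι → K) (p q : ι) : minor a b q p = -minor a b p q := by
  simp only [minor]; ring

theorem minor_self [CommRing K] (a b : ι → K) (p : ι) : minor a b p p = 0 := by
  simp only [minor]; ring

theorem exists_minor_ne_zero [Field K] {a b : ι → K} (ha : a ≠ 0) (hb : b ∉ K ∙ a) :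
    ∃ p q, minor a b p q ≠ 0 := by
  by_contra! hmin
  obtain ⟨p, hp⟩ := Function.ne_iff.1 ha
  refine hb (Submodule.mem_span_singleton.2 ⟨b p / a p, funext fun q => ?_⟩)
  have hpq := hmin p q
  rw [minor] at hpq
  rw [Pi.smul_apply, smul_eq_mul, div_mul_eq_mul_div, div_eq_iff hp]
  linear_combination -hpq

theorem eq_zero_of_cross_eq_zero [Field K] {p₁ q₁ p₂ q₂ x y : K} (hD : p₁ * q₂ - p₂ * q₁ ≠ 0)
    (h₁ : p₁ * y - x * q₁ = 0) (h₂ : p₂ * y - x * q₂ = 0) : x = 0 ∧ y = 0 := by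
  have hx : x * (p₁ * q₂ - p₂ * q₁) = 0 := by linear_combination p₂ * h₁ - p₁ * h₂
  have hy : y * (p₁ * q₂ - p₂ * q₁) = 0 := by linear_combination q₂ * h₁ - q₁ * h₂
  exact ⟨(mul_eq_zero.1 hx).resolve_right hD, (mul_eq_zero.1 hy).resolve_right hD⟩

end Minor

variable {n : ℕ}

theorem u_apply_mk {i j : Fin n} (hji : j < i) {s t : Fin n} (hts : t < s) :
    u n i j hji ⟨(s, t), hts⟩ = if s = i ∧ t = j then 1 else 0 := by
  simp [u, Pi.single_apply]

noncomputable def minorCoeff (p q : RIdx n) : ExteriorAlgebra ℂ (Vn n) →ₗ[ℂ] ℂ :=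
  ExteriorAlgebra.bivectorCoeff (LinearMap.proj p) (LinearMap.proj q)

theorem minorCoeff_wedge (p q : RIdx n) (a b : Vn n) :
    minorCoeff p q (wedge n a b) = minor a b p q := by
  rw [minorCoeff, wedge, ExteriorAlgebra.bivectorCoeff_ι_mul_ι, minor]
  rfl

theorem resRel_le_ker {Φ : ExteriorAlgebra ℂ (Vn n) →ₗ[ℂ] ℂ}
    (hΦ : ∀ (i j k : Fin n) (hkj : k < j) (hji : j < i),
      Φ (wedge n (u n i j hji) (u n i k (hkj.trans hji) - u n j k hkj)) = 0) :
    ResRel n ≤ LinearMap.ker Φ :=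
  Submodule.span_le.2 fun _ ⟨i, j, k, hkj, hji, hw⟩ => hw ▸ hΦ i j k hkj hji

/-- Linear conditions on the Plücker coordinates of `a ∧ b` satisfied by every element of `R`. -/
structure MinorRelations (a b : Vn n) : Prop where
  minor_eq_zero : ∀ {s t s' t' : Fin n} (h : t < s) (h' : t' < s'), s ≠ s' → t ≠ s' → t' ≠ s →
    minor a b ⟨(s, t), h⟩ ⟨(s', t'), h'⟩ = 0
  minor_add_minor_eq_zero : ∀ {i j k : Fin n} (hkj : k < j) (hji : j < i),
    minor a b ⟨(i, j), hji⟩ ⟨(i, k), hkj.trans hji⟩ + minor a b ⟨(i, j), hji⟩ ⟨(j, k), hkj⟩ = 0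

namespace MinorRelations

theorem of_wedge_mem {a b : Vn n} (hw : wedge n a b ∈ ResRel n) : MinorRelations a b where
  minor_eq_zero {s t s' t'} h h' h₁ h₂ h₃ := by
    have hker := resRel_le_ker (Φ := minorCoeff ⟨(s, t), h⟩ ⟨(s', t'), h'⟩) fun i j k hkj hji => by
      simp only [minorCoeff_wedge, minor, u, Pi.sub_apply, Pi.single_apply, Subtype.mk.injEq,
        Prod.mk.injEq]
      split_ifs <;> first | omega | simp
    simpa [minorCoeff_wedge] using hker hw
  minor_add_minor_eq_zero {I J K} hKJ hJI := by
    have hker := resRel_le_ker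
      (Φ := minorCoeff ⟨(I, J), hJI⟩ ⟨(I, K), hKJ.trans hJI⟩ +
        minorCoeff ⟨(I, J), hJI⟩ ⟨(J, K), hKJ⟩)
      fun i j k hkj hji => by
        simp only [LinearMap.add_apply, minorCoeff_wedge, minor, u, Pi.sub_apply, Pi.single_apply,
          Subtype.mk.injEq, Prod.mk.injEq]
        split_ifs <;> first | omega | simp
    simpa [minorCoeff_wedge] using hker hw

theorem exists_minor_ne_zero {a b : Vn n} (hab : MinorRelations a b) {p q : RIdx n}
    (hpq : minor a b p q ≠ 0) :
    ∃ (I J K : Fin n) (hKJ : K < J) (hJI : J < I),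
      minor a b ⟨(I, J), hJI⟩ ⟨(I, K), hKJ.trans hJI⟩ ≠ 0 := by
  obtain ⟨⟨s, t⟩, hts⟩ := p
  obtain ⟨⟨s', t'⟩, hts'⟩ := q
  by_cases hss : s = s'
  · subst hss
    rcases lt_trichotomy t t' with htt | rfl | htt
    · exact ⟨s, t', t, htt, hts', by rwa [minor_swap, neg_ne_zero]⟩
    · exact absurd (minor_self a b _) hpq
    · exact ⟨s, t, t', htt, hts, hpq⟩
  by_cases hts : t = s'
  · subst hts
    refine ⟨s, t, t', hts', hts, fun h => hpq ?_⟩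
    simpa [h] using hab.minor_add_minor_eq_zero hts' hts
  by_cases hst : t' = s
  · subst hst
    refine ⟨s', t', t, hts, hts', fun h => hpq ?_⟩
    rw [minor_swap, neg_eq_zero]
    simpa [h] using hab.minor_add_minor_eq_zero hts hts'
  · exact absurd (hab.minor_eq_zero _ _ hss hts hst) hpq

section

variable {a b : Vn n} (hab : MinorRelations a b) {I J K : Fin n} (hKJ : K < J) (hJI : J < I)
  (hD : minor a b ⟨(I, J), hJI⟩ ⟨(I, K), hKJ.trans hJI⟩ ≠ 0)
include hab hD

theorem apply_IK_add_apply_JK_eq_zero :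
    a ⟨(I, K), hKJ.trans hJI⟩ + a ⟨(J, K), hKJ⟩ = 0 ∧
      b ⟨(I, K), hKJ.trans hJI⟩ + b ⟨(J, K), hKJ⟩ = 0 := by
  have h₁ := hab.minor_add_minor_eq_zero hKJ hJI
  have h₂ := hab.minor_eq_zero (hKJ.trans hJI) hKJ (by omega) (by omega) (by omega)
  simp only [minor] at h₁ h₂
  exact eq_zero_of_cross_eq_zero hD (by linear_combination h₁) (by linear_combination h₂)

theorem minor_above_IJ_eq_zero {s : Fin n} (hIs : I < s) :
    minor a b ⟨(s, I), hIs⟩ ⟨(I, J), hJI⟩ = 0 := by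
  have h₁ := hab.minor_add_minor_eq_zero hJI hIs
  have h₂ := hab.minor_eq_zero (hJI.trans hIs) hJI (by omega) (by omega) (by omega)
  have h₃ := hab.minor_eq_zero (hJI.trans hIs) (hKJ.trans hJI) (by omega) (by omega) (by omega)
  simp only [minor] at h₁ h₂ h₃ ⊢
  obtain ⟨ha, hb⟩ := eq_zero_of_cross_eq_zero (x := a ⟨(s, J), hJI.trans hIs⟩)
    (y := b ⟨(s, J), hJI.trans hIs⟩) hD (by linear_combination -h₂) (by linear_combination -h₃)
  linear_combination h₁ - a ⟨(s, I), hIs⟩ * hb + b ⟨(s, I), hIs⟩ * ha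

theorem minor_IJ_eq_zero_of_ne {s t : Fin n} (hts : t < s) (hsI : s ≠ I) (hsJ : s ≠ J) :
    minor a b ⟨(I, J), hJI⟩ ⟨(s, t), hts⟩ = 0 := by
  by_cases htI : t = I
  · subst htI
    rw [minor_swap, hab.minor_above_IJ_eq_zero hKJ hJI hD hts, neg_zero]
  · exact hab.minor_eq_zero hJI hts (Ne.symm hsI) (Ne.symm hsJ) htI

theorem minor_IK_eq_zero_of_ne {s t : Fin n} (hts : t < s) (hsI : s ≠ I) (hsJ : s ≠ J) :
    minor a b ⟨(I, K), hKJ.trans hJI⟩ ⟨(s, t), hts⟩ = 0 := by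
  obtain ⟨ha, hb⟩ := hab.apply_IK_add_apply_JK_eq_zero hKJ hJI hD
  by_cases htI : t = I
  · subst htI
    have h := hab.minor_eq_zero hts hKJ hsJ (by omega) (by omega)
    simp only [minor] at h ⊢
    linear_combination h + b ⟨(s, t), hts⟩ * ha - a ⟨(s, t), hts⟩ * hb
  by_cases hsK : s = K
  · subst hsK
    have h₁ := hab.minor_eq_zero (hts.trans (hKJ.trans hJI)) hKJ (by omega) (by omega) (by omega)
    have h₂ := hab.minor_add_minor_eq_zero hts (hKJ.trans hJI)
    simp only [minor] at h₁ h₂ ⊢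
    linear_combination h₂ - h₁ - b ⟨(I, t), hts.trans (hKJ.trans hJI)⟩ * ha +
      a ⟨(I, t), hts.trans (hKJ.trans hJI)⟩ * hb
  · exact hab.minor_eq_zero (hKJ.trans hJI) hts (Ne.symm hsI) (Ne.symm hsK) htI

theorem apply_eq_zero_of_ne {s t : Fin n} (hts : t < s) (hsI : s ≠ I) (hsJ : s ≠ J) :
    a ⟨(s, t), hts⟩ = 0 ∧ b ⟨(s, t), hts⟩ = 0 :=
  eq_zero_of_cross_eq_zero hD (hab.minor_IJ_eq_zero_of_ne hKJ hJI hD hts hsI hsJ)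
    (hab.minor_IK_eq_zero_of_ne hKJ hJI hD hts hsI hsJ)

theorem apply_eq_zero_of_between {l : Fin n} (hJl : J < l) (hlI : l < I) :
    a ⟨(I, l), hlI⟩ = 0 := by
  obtain ⟨ha, hb⟩ := hab.apply_IK_add_apply_JK_eq_zero hKJ hJI hD
  obtain ⟨ha', hb'⟩ := hab.apply_eq_zero_of_ne hKJ hJI hD hJl hlI.ne hJl.ne'
  have h₁ := hab.minor_add_minor_eq_zero hJl hlI
  have h₂ := hab.minor_eq_zero hlI hKJ (by omega) (by omega) (by omega)
  simp only [minor] at h₁ h₂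
  exact (eq_zero_of_cross_eq_zero (y := b ⟨(I, l), hlI⟩) hD
    (by linear_combination -h₁ + a ⟨(I, l), hlI⟩ * hb' - b ⟨(I, l), hlI⟩ * ha')
    (by linear_combination h₂ + b ⟨(I, l), hlI⟩ * ha - a ⟨(I, l), hlI⟩ * hb)).1

theorem apply_add_apply_eq_zero {l : Fin n} (hlJ : l < J) :
    a ⟨(I, l), hlJ.trans hJI⟩ + a ⟨(J, l), hlJ⟩ = 0 := by
  obtain ⟨ha, hb⟩ := hab.apply_IK_add_apply_JK_eq_zero hKJ hJI hD
  have h₁ := hab.minor_add_minor_eq_zero hlJ hJI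
  have h₂ := hab.minor_eq_zero (hlJ.trans hJI) hKJ (by omega) (by omega) (by omega)
  have h₃ := hab.minor_eq_zero hlJ (hKJ.trans hJI) (by omega) (by omega) (by omega)
  simp only [minor] at h₁ h₂ h₃
  exact (eq_zero_of_cross_eq_zero (y := b ⟨(I, l), hlJ.trans hJI⟩ + b ⟨(J, l), hlJ⟩) hD
    (by linear_combination h₁)
    (by linear_combination h₂ - h₃ + b ⟨(I, l), hlJ.trans hJI⟩ * ha -
          a ⟨(I, l), hlJ.trans hJI⟩ * hb)).1

theorem mem_L : a ∈ L n I J hJI :=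
  ⟨fun _ hlJ => hab.apply_add_apply_eq_zero hKJ hJI hD hlJ,
    fun _ hJl hlI => hab.apply_eq_zero_of_between hKJ hJI hD hJl hlI,
    fun _ _ hts hsI hsJ => (hab.apply_eq_zero_of_ne hKJ hJI hD hts hsI hsJ).1⟩

end

end MinorRelations

theorem eq_smul_add_sum_of_mem_L {I J : Fin n} (hJI : J < I) {a : Vn n} (ha : a ∈ L n I J hJI) :
    a = a ⟨(I, J), hJI⟩ • u n I J hJI +
      ∑ l : {l : Fin n // l < J},
        a ⟨(I, l), l.2.trans hJI⟩ • (u n I l (l.2.trans hJI) - u n J l l.2) := by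
  obtain ⟨hIJ, hI, hrows⟩ := ha
  ext ⟨⟨s, t⟩, hts⟩
  simp only [Pi.add_apply, Finset.sum_apply, Pi.smul_apply, Pi.sub_apply, smul_eq_mul, u_apply_mk]
  rcases lt_trichotomy t J with htJ | rfl | hJt
  · rw [Finset.sum_eq_single ⟨t, htJ⟩
      (fun l _ hl => by simp [Subtype.ext_iff] at hl; simp [Ne.symm hl]) (by simp)]
    by_cases hsI : s = I
    · subst hsI; simp [htJ.ne, hJI.ne']
    by_cases hsJ : s = J
    · subst hsJ; simp [hJI.ne]; linear_combination hIJ t htJ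
    · simp [hsI, hsJ, hrows s t hts hsI hsJ]
  · rw [Finset.sum_eq_zero (fun l _ => by simp [l.2.ne'])]
    by_cases hsI : s = I
    · subst hsI; simp
    · simp [hsI, hrows s t hts hsI hts.ne']
  · rw [Finset.sum_eq_zero (fun l _ => by simp [(l.2.trans hJt).ne'])]
    by_cases hsI : s = I
    · subst hsI; simp [hJt.ne', hI t hJt hts]
    · have hsJ : s ≠ J := (hJt.trans hts).ne'
      simp [hsI, hrows s t hts hsI hsJ]

theorem mem_R1_of_mem_L {I J : Fin n} (hJI : J < I) (hJ : 1 ≤ (J : ℕ)) {a : Vn n}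
    (ha : a ∈ L n I J hJI) : a ∈ R1 n := by
  let tail (l : {l : Fin n // l < J}) : Vn n := u n I l (l.2.trans hJI) - u n J l l.2
  have h0J : (⟨0, by omega⟩ : Fin n) < J := Fin.lt_def.2 hJ
  have hW : Submodule.span ℂ (Set.range tail) ≤ (ResRel n).comap
      (LinearMap.mulLeft ℂ (ExteriorAlgebra.ι ℂ (u n I J hJI)) ∘ₗ ExteriorAlgebra.ι ℂ) :=
    Submodule.span_le.2 <| Set.range_subset_iff.2 fun l =>
      Submodule.subset_span ⟨I, J, l, l.2, hJI, rfl⟩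
  refine ExteriorAlgebra.exists_ι_mul_ι_mem_of_mem_sup (by simp [u]) (fun x hx => hW hx)
    (Submodule.subset_span ⟨⟨_, h0J⟩, rfl⟩) ?_ ?_
  · intro hmem
    obtain ⟨c, hc⟩ := Submodule.mem_span_singleton.1 hmem
    simpa [tail, u_apply_mk, hJI.ne] using congrFun hc ⟨(J, _), h0J⟩
  · rw [eq_smul_add_sum_of_mem_L hJI ha]
    exact Submodule.add_mem_sup (Submodule.smul_mem _ _ (Submodule.mem_span_singleton_self _))
      (Submodule.sum_mem _ fun l _ => Submodule.smul_mem _ _ (Submodule.subset_span ⟨l, rfl⟩))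

/-- For `n ≥ 3`, the first resonance variety of the upper McCool group `PΣₙ⁺`
decomposes as `R₁ = ⋃_{2 ≤ j < i ≤ n} L_{ij}` (in `0`-indexed terms, `1 ≤ j`,
i.e. `j ≠ 0`). -/
theorem R1_eq_union_L (n : ℕ) (hn : 3 ≤ n) :
    ∀ a : Vn n, a ∈ R1 n ↔
      ∃ (i j : Fin n) (hji : j < i), 1 ≤ j.val ∧ a ∈ L n i j hji := by
  intro a
  constructor
  · rintro ⟨b, hb, hw⟩
    rcases eq_or_ne a 0 with rfl | ha
    · exact ⟨⟨2, by omega⟩, ⟨1, by omega⟩, Fin.lt_def.2 (by simp), le_rfl, zero_mem _⟩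
    have hab := MinorRelations.of_wedge_mem hw
    obtain ⟨p, q, hpq⟩ := exists_minor_ne_zero ha hb
    obtain ⟨I, J, K, hKJ, hJI, hD⟩ := hab.exists_minor_ne_zero hpq
    exact ⟨I, J, hJI, by omega, hab.mem_L hKJ hJI hD⟩
  · rintro ⟨I, J, hJI, hJ, ha⟩
    exact mem_R1_of_mem_L hJI hJ ha
end

section
/- Let q: Λ²V → Λ²V/R be the quotient map. For each 2 ≤ j < i ≤ n, the dimension of the image q(span{a ∧ b : a, b ∈ L_{ij}}) equals C(j−1,2); in particular L_{ij} is 0-isotropic (i.e. this image is zero) precisely when j = 2, and is C(j−1,2)-isotropic for j ≥ 3. -/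
/-!
`L_{ij}` is spanned by `u_{ij}` and the vectors `v_l = u_{jl} - u_{il}` (`l < j`). Each
`u_{ij} ∧ v_l` is minus a defining relation, so the image of `Λ²L_{ij}` in `Λ²V/R` is spanned by
the classes of `v_m ∧ v_l` for `l < m < j`. These `C(j-1, 2)` classes are linearly independent:
the `2`-form `x_{jm} ∧ (x_{jl} + x_{ml})` vanishes on `R` and is dual to the class of `v_m ∧ v_l`.
-/

namespace ExteriorAlgebra

variable {R M : Type*} [CommRing R] [AddCommGroup M] [Module R M]

noncomputable def wedgeForm (f g : Module.Dual R M) : Module.Dual R (ExteriorAlgebra R M) :=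
  liftAlternating (Pi.single 2 (Matrix.detRowAlternating.compLinearMap (LinearMap.pi ![f, g])))

theorem wedgeForm_ι_mul_ι (f g : Module.Dual R M) (a b : M) :
    wedgeForm f g (ι R a * ι R b) = f a * g b - f b * g a := by
  have : ι R a * ι R b = ιMulti R 2 ![a, b] := by simp [ιMulti_apply]
  rw [wedgeForm, this, liftAlternating_apply_ιMulti, Pi.single_eq_same,
    AlternatingMap.compLinearMap_apply]
  exact (Matrix.det_fin_two _).trans (by simp [mul_comm])

end ExteriorAlgebra

namespace UpperMcCool

open ExteriorAlgebra Submodule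

variable {n : ℕ}

theorem u_apply {a b : Fin n} (h : b < a) (s t : Fin n) (hts : t < s) :
    u n a b h ⟨(s, t), hts⟩ = if s = a ∧ t = b then 1 else 0 := by
  simp [u, Pi.single_apply, Subtype.ext_iff, Prod.ext_iff]

theorem wedge_self (a : Vn n) : wedge n a a = 0 := ι_sq_zero a

theorem wedge_swap (a b : Vn n) : wedge n b a = -wedge n a b :=
  eq_neg_of_add_eq_zero_left (ι_add_mul_swap b a)

noncomputable def wedgeBilin (n : ℕ) : Vn n →ₗ[ℂ] Vn n →ₗ[ℂ] ExteriorAlgebra ℂ (Vn n) :=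
  (LinearMap.mul ℂ _).compl₁₂ (ι ℂ) (ι ℂ)

theorem span_wedge_eq_map₂ (P : Submodule ℂ (Vn n)) :
    span ℂ {w | ∃ a ∈ P, ∃ b ∈ P, w = wedge n a b} = map₂ (wedgeBilin n) P P := by
  rw [map₂_eq_span_image2]
  congr 1
  ext w
  exact ⟨fun ⟨a, ha, b, hb, e⟩ => ⟨a, ha, b, hb, e.symm⟩,
    fun ⟨a, ha, b, hb, e⟩ => ⟨a, ha, b, hb, e.symm⟩⟩

section L

variable {i j : Fin n} (hji : j < i)

noncomputable def uDiff (l : Fin n) (hl : l < j) : Vn n :=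
  u n j l hl - u n i l (hl.trans hji)

theorem uDiff_apply (l : Fin n) (hl : l < j) (s t : Fin n) (hts : t < s) :
    uDiff hji l hl ⟨(s, t), hts⟩ =
      (if s = j ∧ t = l then 1 else 0) - (if s = i ∧ t = l then 1 else 0) := by
  simp [uDiff, u_apply]

theorem u_mem_L : u n i j hji ∈ L n i j hji := by
  refine ⟨fun l hl => ?_, fun l hjl _ => ?_, fun s t _ hsi _ => ?_⟩
  · simp [u_apply, hl.ne, hji.ne]
  · simp [u_apply, hjl.ne']
  · simp [u_apply, hsi]

theorem uDiff_mem_L (l : Fin n) (hl : l < j) : uDiff hji l hl ∈ L n i j hji := by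
  refine ⟨fun l' hl' => ?_, fun l' hjl' _ => ?_, fun s t _ hsi hsj => ?_⟩
  · simp only [uDiff_apply, hji.ne, hji.ne', false_and, if_false]
    split_ifs <;> ring
  · simp [uDiff_apply, (hl.trans hjl').ne']
  · simp [uDiff_apply, hsi, hsj]

theorem sum_smul_uDiff_apply (c : {l // l < j} → ℂ) (s t : Fin n) (hts : t < s) :
    (∑ l : {l // l < j}, c l • uDiff hji l l.2) ⟨(s, t), hts⟩ =
      if htj : t < j then c ⟨t, htj⟩ * ((if s = j then 1 else 0) - (if s = i then 1 else 0))
      else 0 := by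
  simp only [Finset.sum_apply, Pi.smul_apply, uDiff_apply, smul_eq_mul]
  by_cases htj : t < j
  · rw [dif_pos htj, Fintype.sum_eq_single ⟨t, htj⟩ fun l hl => ?_]
    · simp
    · have : t ≠ l := fun e => hl (Subtype.ext e.symm)
      simp [this]
  · rw [dif_neg htj]
    refine Finset.sum_eq_zero fun l _ => ?_
    have : t ≠ l := fun e => htj (e ▸ l.2)
    simp [this]

theorem eq_sum_of_mem_L {a : Vn n} (ha : a ∈ L n i j hji) :
    a = a ⟨(i, j), hji⟩ • u n i j hji +
      ∑ l : {l // l < j}, a ⟨(j, l), l.2⟩ • uDiff hji l l.2 := by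
  obtain ⟨hi_lt, hi_gt, h_other⟩ := ha
  ext ⟨⟨s, t⟩, hts⟩
  rw [Pi.add_apply, sum_smul_uDiff_apply, Pi.smul_apply, u_apply, smul_eq_mul]
  by_cases hsi : s = i
  · subst hsi
    rcases lt_trichotomy t j with htj | rfl | hjt
    · simp [htj, htj.ne, hji.ne', eq_neg_of_add_eq_zero_left (hi_lt t htj)]
    · simp
    · simp [hi_gt t hjt hts, hjt.ne', not_lt_of_gt hjt]
  · by_cases hsj : s = j
    · subst hsj
      simp [hts, hsi]
    · simp [h_other s t hts hsi hsj, hsi, hsj]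

def generatorsL : Set (Vn n) :=
  insert (u n i j hji) (Set.range fun l : {l // l < j} => uDiff hji l l.2)

theorem L_eq_span_generatorsL : L n i j hji = span ℂ (generatorsL hji) := by
  refine le_antisymm (fun a ha => ?_) (span_le.2 ?_)
  · rw [eq_sum_of_mem_L hji ha]
    exact add_mem (smul_mem _ _ (subset_span (Set.mem_insert _ _)))
      (sum_mem fun l _ => smul_mem _ _ (subset_span (Set.mem_insert_of_mem _ ⟨l, rfl⟩)))
  · rintro _ (rfl | ⟨l, rfl⟩)
    exacts [u_mem_L hji, uDiff_mem_L hji l l.2]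

end L

abbrev PairsBelow (j : Fin n) : Type := {p : Fin n × Fin n // p.1 < p.2 ∧ p.2 < j}

theorem card_pairsBelow (j : Fin n) : Fintype.card (PairsBelow j) = j.val.choose 2 := by
  rw [Fintype.card_subtype, ← Fin.card_Iio j, ← Finset.card_product_filter_lt]
  congr 1
  ext p
  simp only [Finset.mem_filter, Finset.mem_univ, true_and, Finset.mem_product, Finset.mem_Iio]
  exact ⟨fun h => ⟨⟨h.1.trans h.2, h.2⟩, h.1⟩, fun h => ⟨h.2, h.1.2⟩⟩

section Quotient

variable {i j : Fin n} (hji : j < i)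

noncomputable def wedgeClass (p : PairsBelow j) : ExteriorAlgebra ℂ (Vn n) ⧸ ResRel n :=
  (ResRel n).mkQ (wedge n (uDiff hji p.1.2 p.2.2) (uDiff hji p.1.1 (p.2.1.trans p.2.2)))

theorem wedge_u_uDiff_mem_resRel (l : Fin n) (hl : l < j) :
    wedge n (u n i j hji) (uDiff hji l hl) ∈ ResRel n := by
  have h : wedge n (u n i j hji) (uDiff hji l hl) =
      -wedge n (u n i j hji) (u n i l (hl.trans hji) - u n j l hl) := by
    rw [uDiff, ← neg_sub, wedge, wedge, map_neg, mul_neg]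
  rw [h]
  exact neg_mem (subset_span ⟨i, j, l, hl, hji, rfl⟩)

theorem mkQ_wedge_mem_span_wedgeClass {a b : Vn n} (ha : a ∈ generatorsL hji)
    (hb : b ∈ generatorsL hji) :
    (ResRel n).mkQ (wedge n a b) ∈ span ℂ (Set.range (wedgeClass hji)) := by
  have mkQ_eq_zero {w} (hw : w ∈ ResRel n) : (ResRel n).mkQ w = 0 :=
    (Quotient.mk_eq_zero _).2 hw
  rcases ha with rfl | ⟨⟨l, hl⟩, rfl⟩ <;> rcases hb with rfl | ⟨⟨m, hm⟩, rfl⟩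
  · simp [wedge_self]
  · simp [mkQ_eq_zero (wedge_u_uDiff_mem_resRel hji m hm)]
  · rw [wedge_swap, map_neg, mkQ_eq_zero (wedge_u_uDiff_mem_resRel hji l hl), neg_zero]
    exact zero_mem _
  · rcases lt_trichotomy l m with hlm | rfl | hml
    · rw [wedge_swap, map_neg]
      exact neg_mem (subset_span ⟨⟨(l, m), hlm, hm⟩, rfl⟩)
    · simp [wedge_self]
    · exact subset_span ⟨⟨(m, l), hml, hl⟩, rfl⟩

theorem map_mkQ_span_wedge_eq :
    map (ResRel n).mkQ (span ℂ {w | ∃ a ∈ L n i j hji, ∃ b ∈ L n i j hji, w = wedge n a b}) =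
      span ℂ (Set.range (wedgeClass hji)) := by
  refine le_antisymm ?_ (span_le.2 ?_)
  · rw [span_wedge_eq_map₂, L_eq_span_generatorsL, map₂_span_span, map_span, span_le]
    rintro _ ⟨_, ⟨a, ha, b, hb, rfl⟩, rfl⟩
    exact mkQ_wedge_mem_span_wedgeClass hji ha hb
  · rintro _ ⟨p, rfl⟩
    exact mem_map_of_mem (subset_span ⟨_, uDiff_mem_L hji _ _, _, uDiff_mem_L hji _ _, rfl⟩)

end Quotient

section Dual

variable {j : Fin n}

noncomputable def pairDual (p : PairsBelow j) : Module.Dual ℂ (ExteriorAlgebra ℂ (Vn n)) :=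
  wedgeForm (LinearMap.proj ⟨(j, p.1.2), p.2.2⟩)
    (LinearMap.proj ⟨(j, p.1.1), p.2.1.trans p.2.2⟩ + LinearMap.proj ⟨(p.1.2, p.1.1), p.2.1⟩)

theorem pairDual_wedge (p : PairsBelow j) (a b : Vn n) :
    pairDual p (wedge n a b) =
      a ⟨(j, p.1.2), p.2.2⟩ * (b ⟨(j, p.1.1), p.2.1.trans p.2.2⟩ + b ⟨(p.1.2, p.1.1), p.2.1⟩) -
      b ⟨(j, p.1.2), p.2.2⟩ * (a ⟨(j, p.1.1), p.2.1.trans p.2.2⟩ + a ⟨(p.1.2, p.1.1), p.2.1⟩) := by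
  simp [pairDual, wedge, wedgeForm_ι_mul_ι]

/- Only the relation `u_{jm} ∧ (u_{jl} - u_{ml})` meets the support of the form, and on it the
two terms cancel. -/
theorem resRel_le_ker_pairDual (p : PairsBelow j) : ResRel n ≤ LinearMap.ker (pairDual p) := by
  rw [ResRel, span_le]
  rintro _ ⟨a, b, k, hkb, hba, rfl⟩
  obtain ⟨⟨l, m⟩, hlm, hmj⟩ := p
  rw [SetLike.mem_coe, LinearMap.mem_ker, pairDual_wedge]
  simp only [Pi.sub_apply, u_apply]
  have := Fin.lt_def.1 hkb; have := Fin.lt_def.1 hba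
  have := Fin.lt_def.1 hlm; have := Fin.lt_def.1 hmj
  split_ifs <;> first | ring1 | (exfalso; simp only [Fin.ext_iff, not_and] at *; omega)

variable {i : Fin n} (hji : j < i)

theorem pairDual_wedge_uDiff (p q : PairsBelow j) :
    pairDual p (wedge n (uDiff hji q.1.2 q.2.2) (uDiff hji q.1.1 (q.2.1.trans q.2.2))) =
      if p = q then 1 else 0 := by
  obtain ⟨⟨l, m⟩, hlm, hmj⟩ := p
  obtain ⟨⟨l', m'⟩, hlm', hmj'⟩ := q
  rw [pairDual_wedge]
  simp only [uDiff_apply, Subtype.mk.injEq, Prod.mk.injEq, hji.ne, hmj.ne, (hmj.trans hji).ne,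
    false_and, if_false, true_and, sub_zero]
  have hne : ¬(l = m' ∧ m = l') := by rintro ⟨rfl, rfl⟩; exact lt_asymm hlm hlm'
  simp only [add_zero, ite_zero_mul_ite_zero, mul_one, and_comm, hne, if_false, sub_zero]

theorem linearIndependent_wedgeClass : LinearIndependent ℂ (wedgeClass hji) := by
  refine LinearIndependent.of_pairwise_dual_eq_zero_one _
    (fun p => (ResRel n).liftQ (pairDual p) (resRel_le_ker_pairDual p)) (fun p q hpq => ?_)
    (fun p => ?_)
  · simp [wedgeClass, pairDual_wedge_uDiff, hpq]
  · simp [wedgeClass, pairDual_wedge_uDiff]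

end Dual

end UpperMcCool

open UpperMcCool Submodule

theorem L_isotropicity_general (n : ℕ) (i j : Fin n) (hji : j < i)
    (hj : 1 ≤ j.val) :
    Module.rank ℂ (Submodule.map (ResRel n).mkQ
        (Submodule.span ℂ { w | ∃ a ∈ L n i j hji, ∃ b ∈ L n i j hji, w = wedge n a b })) =
      (j.val.choose 2 : Cardinal) ∧
    (Submodule.map (ResRel n).mkQ
        (Submodule.span ℂ { w | ∃ a ∈ L n i j hji, ∃ b ∈ L n i j hji, w = wedge n a b }) = ⊥ ↔
      j.val = 1) := by
  rw [map_mkQ_span_wedge_eq hji]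
  have hli := linearIndependent_wedgeClass hji
  have hrank : Module.rank ℂ (span ℂ (Set.range (wedgeClass hji))) = j.val.choose 2 := by
    rw [rank_span hli, Cardinal.mk_range_eq _ hli.injective, Cardinal.mk_fintype,
      card_pairsBelow]
  refine ⟨hrank, ?_⟩
  rw [← rank_eq_zero, hrank, Nat.cast_eq_zero, Nat.choose_eq_zero_iff]
  omega

/-- Let `q : Λ²V → Λ²V/R` be the quotient map.  For `2 ≤ j < i ≤ n` (`0`-indexed:
`1 ≤ j.val`), the image under `q` of the span of all wedges `a ∧ b` with
`a, b ∈ L_{ij}` has dimension `C(j−1, 2)` (which in `0`-indexed terms is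
`C(j.val, 2)`);  in particular `L_{ij}` is `0`-isotropic (the image vanishes)
precisely when `j = 2` (`0`-indexed: `j.val = 1`). -/
theorem L_isotropicity (n : ℕ) (hn : 3 ≤ n) (i j : Fin n) (hji : j < i)
    (hj : 1 ≤ j.val) :
    Module.rank ℂ (Submodule.map (ResRel n).mkQ
        (Submodule.span ℂ { w | ∃ a ∈ L n i j hji, ∃ b ∈ L n i j hji, w = wedge n a b })) =
      (j.val.choose 2 : Cardinal) ∧
    (Submodule.map (ResRel n).mkQ
        (Submodule.span ℂ { w | ∃ a ∈ L n i j hji, ∃ b ∈ L n i j hji, w = wedge n a b }) = ⊥ ↔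
      j.val = 1) :=
  L_isotropicity_general n i j hji hj
end

section
/- Let ι: V_n → V_{n+1} be the linear inclusion sending each basis vector u_{ij} of V_n to the basis vector u_{ij} of V_{n+1}. Then for every a ∈ V_n, one has a ∈ R_1^{(n)} if and only if ι(a) ∈ R_1^{(n+1)}; that is, R_1(PΣ_n^+) = R_1(PΣ_{n+1}^+) ∩ H^1(PΣ_n^+;ℂ). -/
/-- The linear inclusion `V_n → V_{n+1}` sending each basis vector `u_{ij}` of `V_n`
to the corresponding basis vector `u_{ij}` of `V_{n+1}`. -/
noncomputable def inclV (n : ℕ) : Vn n →ₗ[ℂ] Vn (n + 1) where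
  toFun a p :=
    if h : p.1.1.val < n then
      a ⟨(⟨p.1.1.val, h⟩, ⟨p.1.2.val, lt_trans p.2 h⟩), p.2⟩
    else 0
  map_add' a b := by
    funext p
    by_cases h : p.1.1.val < n <;> simp [h]
  map_smul' c a := by
    funext p
    by_cases h : p.1.1.val < n <;> simp [h]


/-!
Extending a witness along `V_n → V_{n+1}` is harmless, since relations go to relations.
Conversely, the restriction `V_{n+1} → V_n` forgetting the last row `u_{n+1,j}` sends relations
to relations or to zero, so restricting a witness `b` for `ι(a)` gives a witness for `a` unless
the restriction of `b` lies in `ℂ·a`. In that case `b` has a nonzero last-row coordinate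
`b_{n+1,t}`, and evaluating `ι(a) ∧ b` against suitable 2-forms that vanish on `R` shows
`a_{sr} b_{n+1,t} = 0` for all `r < s`: so `a = 0`, which is resonant as soon as `n ≥ 2`.
-/

section WedgePairing

variable {R M : Type*} [CommRing R] [AddCommGroup M] [Module R M]

noncomputable def Module.Dual.wedgeForm (f g : Module.Dual R M) : M [⋀^Fin 2]→ₗ[R] R :=
  MultilinearMap.alternatization ((MultilinearMap.mkPiAlgebra R (Fin 2) R).compLinearMap ![f, g])

theorem Module.Dual.wedgeForm_apply (f g : Module.Dual R M) (v : Fin 2 → M) :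
    f.wedgeForm g v = f (v 0) * g (v 1) - f (v 1) * g (v 0) := by
  -- the alternatization sum is the Leibniz expansion of a `2 × 2` determinant
  have hdet := Matrix.det_apply (Matrix.of fun j i => ![f, g] i (v j))
  rw [Matrix.det_fin_two] at hdet
  simp only [Module.Dual.wedgeForm, MultilinearMap.alternatization_apply,
    MultilinearMap.domDomCongr_apply, MultilinearMap.compLinearMap_apply,
    MultilinearMap.mkPiAlgebra_apply, Fin.prod_univ_two, Matrix.of_apply, Matrix.cons_val_zero,
    Matrix.cons_val_one, Matrix.cons_val_fin_one] at hdet ⊢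
  rw [← hdet]
  ring

noncomputable def ExteriorAlgebra.wedgePairing (f g : Module.Dual R M) :
    ExteriorAlgebra R M →ₗ[R] R :=
  ExteriorAlgebra.liftAlternating (Pi.single 2 (f.wedgeForm g))

theorem ExteriorAlgebra.wedgePairing_ι_mul_ι (f g : Module.Dual R M) (x y : M) :
    wedgePairing f g (ι R x * ι R y) = f x * g y - f y * g x := by
  rw [wedgePairing, liftAlternating_ι_mul, liftAlternating_ι]
  simp [Module.Dual.wedgeForm_apply]

end WedgePairing

open ExteriorAlgebra Submodule

namespace RIdx

variable {n : ℕ}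

def castSucc (p : RIdx n) : RIdx (n + 1) :=
  ⟨(p.1.1.castSucc, p.1.2.castSucc), Fin.castSucc_lt_castSucc_iff.mpr p.2⟩

theorem exists_castSucc_eq_of_fst_ne_last {q : RIdx (n + 1)} (hq : q.1.1 ≠ Fin.last n) :
    ∃ p : RIdx n, p.castSucc = q := by
  have hq' : q.1.2 ≠ Fin.last n := Fin.ne_last_of_lt q.2
  exact ⟨⟨(q.1.1.castPred hq, q.1.2.castPred hq'), q.2⟩, by simp [castSucc]⟩

end RIdx

section Restriction

variable {n : ℕ}

theorem u_apply {m : ℕ} (i j : Fin m) (h : j < i) (p : RIdx m) :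
    u m i j h p = if p.1.1 = i ∧ p.1.2 = j then 1 else 0 := by
  simp [u, Pi.single_apply, Subtype.ext_iff, Prod.ext_iff]

theorem inclV_apply_castSucc (a : Vn n) (i j : Fin n) (h : j.castSucc < i.castSucc) :
    inclV n a ⟨(i.castSucc, j.castSucc), h⟩ =
      a ⟨(i, j), Fin.castSucc_lt_castSucc_iff.mp h⟩ := by
  simp [inclV]

theorem inclV_apply_of_fst_eq_last (a : Vn n) {q : RIdx (n + 1)} (hq : q.1.1 = Fin.last n) :
    inclV n a q = 0 := by
  simp [inclV, hq]

theorem inclV_u (i j : Fin n) (h : j < i) :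
    inclV n (u n i j h) = u (n + 1) i.castSucc j.castSucc (Fin.castSucc_lt_castSucc_iff.mpr h) := by
  funext q
  by_cases hq : q.1.1 = Fin.last n
  · simp [inclV_apply_of_fst_eq_last _ hq, u_apply, hq, (Fin.castSucc_ne_last i).symm]
  · obtain ⟨p, rfl⟩ := RIdx.exists_castSucc_eq_of_fst_ne_last hq
    simp [RIdx.castSucc, inclV_apply_castSucc, u_apply]

noncomputable def restrV (n : ℕ) : Vn (n + 1) →ₗ[ℂ] Vn n :=
  LinearMap.funLeft ℂ ℂ RIdx.castSucc

theorem restrV_apply (b : Vn (n + 1)) (p : RIdx n) : restrV n b p = b p.castSucc := rfl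

theorem restrV_inclV (a : Vn n) : restrV n (inclV n a) = a :=
  funext fun p => inclV_apply_castSucc a p.1.1 p.1.2 _

theorem inclV_restrV_of_forall_fst_eq_last {b : Vn (n + 1)}
    (hb : ∀ q : RIdx (n + 1), q.1.1 = Fin.last n → b q = 0) : inclV n (restrV n b) = b := by
  funext q
  by_cases hq : q.1.1 = Fin.last n
  · rw [inclV_apply_of_fst_eq_last _ hq, hb q hq]
  · obtain ⟨p, rfl⟩ := RIdx.exists_castSucc_eq_of_fst_ne_last hq
    exact inclV_apply_castSucc _ p.1.1 p.1.2 _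

theorem restrV_u_last (j : Fin (n + 1)) (h : j < Fin.last n) :
    restrV n (u (n + 1) (Fin.last n) j h) = 0 := by
  funext p
  simp [restrV_apply, u_apply, RIdx.castSucc, Fin.castSucc_ne_last]

theorem restrV_u_castSucc (i j : Fin n) (h : j.castSucc < i.castSucc) :
    restrV n (u (n + 1) i.castSucc j.castSucc h) = u n i j (Fin.castSucc_lt_castSucc_iff.mp h) := by
  funext p
  simp [restrV_apply, u_apply, RIdx.castSucc]

end Restriction

section ResRel

variable {n : ℕ}

theorem map_wedge {m m' : ℕ} (f : Vn m →ₗ[ℂ] Vn m') (a b : Vn m) :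
    ExteriorAlgebra.map f (wedge m a b) = wedge m' (f a) (f b) := by
  simp [wedge]

theorem wedge_inclV_mem_ResRel {a b : Vn n} (h : wedge n a b ∈ ResRel n) :
    wedge (n + 1) (inclV n a) (inclV n b) ∈ ResRel (n + 1) := by
  have hle : (ResRel n).map (ExteriorAlgebra.map (inclV n)).toLinearMap ≤ ResRel (n + 1) := by
    rw [ResRel, map_span_le]
    rintro _ ⟨i, j, k, hkj, hji, rfl⟩
    refine subset_span ⟨i.castSucc, j.castSucc, k.castSucc, Fin.castSucc_lt_castSucc_iff.mpr hkj,
      Fin.castSucc_lt_castSucc_iff.mpr hji, ?_⟩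
    simp [map_wedge, inclV_u]
  simpa [map_wedge] using hle (mem_map_of_mem h)

theorem wedge_restrV_mem_ResRel {a : Vn n} {b : Vn (n + 1)}
    (h : wedge (n + 1) (inclV n a) b ∈ ResRel (n + 1)) : wedge n a (restrV n b) ∈ ResRel n := by
  have hle : (ResRel (n + 1)).map (ExteriorAlgebra.map (restrV n)).toLinearMap ≤ ResRel n := by
    rw [ResRel, map_span_le]
    rintro _ ⟨i, j, k, hkj, hji, rfl⟩
    by_cases hi : i = Fin.last n
    · subst hi
      simp [restrV_u_last, wedge]
    obtain ⟨i, rfl⟩ := Fin.exists_castSucc_eq.mpr hi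
    obtain ⟨j, rfl⟩ := Fin.exists_castSucc_eq.mpr (Fin.ne_last_of_lt hji)
    obtain ⟨k, rfl⟩ := Fin.exists_castSucc_eq.mpr (Fin.ne_last_of_lt hkj)
    refine subset_span ⟨i, j, k, Fin.castSucc_lt_castSucc_iff.mp hkj,
      Fin.castSucc_lt_castSucc_iff.mp hji, ?_⟩
    simp [map_wedge, restrV_u_castSucc]
  simpa [map_wedge, restrV_inclV] using hle (mem_map_of_mem h)

end ResRel

section Pairing

variable {m : ℕ}

theorem wedgePairing_eq_zero_of_mem_ResRel {f g : Module.Dual ℂ (Vn m)}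
    (hfg : ∀ (i j k : Fin m) (hkj : k < j) (hji : j < i),
      f (u m i j hji) * g (u m i k (hkj.trans hji) - u m j k hkj) =
        f (u m i k (hkj.trans hji) - u m j k hkj) * g (u m i j hji))
    {x : ExteriorAlgebra ℂ (Vn m)} (hx : x ∈ ResRel m) : wedgePairing f g x = 0 := by
  have hle : ResRel m ≤ LinearMap.ker (wedgePairing f g) := by
    rw [ResRel, span_le]
    rintro _ ⟨i, j, k, hkj, hji, rfl⟩
    rw [SetLike.mem_coe, LinearMap.mem_ker, wedge, wedgePairing_ι_mul_ι, hfg, sub_self]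
  exact hle hx

theorem wedgePairing_proj_eq_zero_of_mem_ResRel {p q : RIdx m} (h₁ : p.1.1 ≠ q.1.1)
    (h₂ : p.1.1 ≠ q.1.2) (h₃ : q.1.1 ≠ p.1.2) {x : ExteriorAlgebra ℂ (Vn m)}
    (hx : x ∈ ResRel m) : wedgePairing (LinearMap.proj p) (LinearMap.proj q) x = 0 := by
  refine wedgePairing_eq_zero_of_mem_ResRel (fun i j k hkj hji => ?_) hx
  obtain ⟨⟨s, r⟩, hrs⟩ := p
  obtain ⟨⟨t, l⟩, hlt⟩ := q
  simp only [LinearMap.proj_apply, Pi.sub_apply, u_apply] at h₁ h₂ h₃ ⊢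
  split_ifs <;> simp_all

/- `u_ts ∧ u_tr` and `u_ts ∧ u_sr` occur in the relations only through their difference
`u_ts ∧ (u_tr - u_sr)`, on which the two coefficients cancel. -/
theorem wedgePairing_proj_add_proj_eq_zero_of_mem_ResRel {r s t : Fin m} (hrs : r < s)
    (hst : s < t) {x : ExteriorAlgebra ℂ (Vn m)} (hx : x ∈ ResRel m) :
    wedgePairing (LinearMap.proj ⟨(t, s), hst⟩)
      (LinearMap.proj ⟨(t, r), hrs.trans hst⟩ + LinearMap.proj ⟨(s, r), hrs⟩) x = 0 := by
  refine wedgePairing_eq_zero_of_mem_ResRel (fun i j k hkj hji => ?_) hx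
  simp only [LinearMap.add_apply, LinearMap.proj_apply, Pi.sub_apply, u_apply]
  split_ifs <;> first | ring1 | (exfalso; omega)

end Pairing

section Resonance

variable {n : ℕ}

theorem apply_mul_apply_eq_zero_of_wedge_inclV_mem {a : Vn n} {b : Vn (n + 1)}
    (hab : wedge (n + 1) (inclV n a) b ∈ ResRel (n + 1)) (p : RIdx n) {q : RIdx (n + 1)}
    (hq : q.1.1 = Fin.last n) : a p * b q = 0 := by
  obtain ⟨⟨t, l⟩, hlt⟩ := q
  dsimp only at hq
  subst hq
  by_cases hl : l = p.1.1.castSucc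
  · subst hl
    have h := wedgePairing_proj_add_proj_eq_zero_of_mem_ResRel
      (Fin.castSucc_lt_castSucc_iff.mpr p.2) hlt hab
    simp only [wedge, wedgePairing_ι_mul_ι, LinearMap.add_apply, LinearMap.coe_proj,
      Function.eval, inclV_apply_of_fst_eq_last, inclV_apply_castSucc, Prod.mk.eta,
      Subtype.coe_eta] at h
    linear_combination -h
  · have h := wedgePairing_proj_eq_zero_of_mem_ResRel (p := p.castSucc)
      (q := ⟨(Fin.last n, l), hlt⟩) (Fin.castSucc_ne_last _) (Ne.symm hl)
      (Fin.castSucc_ne_last _).symm hab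
    simp only [RIdx.castSucc, wedge, wedgePairing_ι_mul_ι, LinearMap.coe_proj, Function.eval,
      inclV_apply_castSucc, Prod.mk.eta, Subtype.coe_eta, inclV_apply_of_fst_eq_last] at h
    linear_combination h

theorem eq_zero_of_wedge_inclV_mem {a : Vn n} {b : Vn (n + 1)}
    (hab : wedge (n + 1) (inclV n a) b ∈ ResRel (n + 1)) {q : RIdx (n + 1)}
    (hq : q.1.1 = Fin.last n) (hbq : b q ≠ 0) : a = 0 :=
  funext fun p =>
    (mul_eq_zero.mp (apply_mul_apply_eq_zero_of_wedge_inclV_mem hab p hq)).resolve_right hbq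

theorem exists_fst_eq_last_apply_ne_zero {a : Vn n} {b : Vn (n + 1)}
    (ha : restrV n b ∈ span ℂ {a}) (hb : b ∉ span ℂ {inclV n a}) :
    ∃ q : RIdx (n + 1), q.1.1 = Fin.last n ∧ b q ≠ 0 := by
  by_contra! h
  obtain ⟨c, hc⟩ := mem_span_singleton.mp ha
  refine hb (mem_span_singleton.mpr ⟨c, ?_⟩)
  rw [← map_smul, hc, inclV_restrV_of_forall_fst_eq_last h]

theorem zero_mem_R1 (hn : 2 ≤ n) : (0 : Vn n) ∈ R1 n := by
  let p : RIdx n := ⟨(⟨1, hn⟩, ⟨0, by omega⟩), Nat.zero_lt_one⟩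
  refine ⟨Pi.single p 1, fun h => ?_, by simp [wedge]⟩
  rw [span_zero_singleton, mem_bot] at h
  simpa using congrFun h p

theorem inclV_mem_R1 {a : Vn n} (ha : a ∈ R1 n) : inclV n a ∈ R1 (n + 1) := by
  obtain ⟨b, hb, hab⟩ := ha
  refine ⟨inclV n b, fun h => hb ?_, wedge_inclV_mem_ResRel hab⟩
  obtain ⟨c, hc⟩ := mem_span_singleton.mp h
  exact mem_span_singleton.mpr ⟨c, by simpa [restrV_inclV] using congrArg (restrV n) hc⟩

end Resonance

/-- `R₁(PΣₙ⁺) = R₁(PΣₙ₊₁⁺) ∩ H¹(PΣₙ⁺; ℂ)`: a vector `a ∈ Vₙ` is in the first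
resonance variety of `PΣₙ⁺` if and only if its image in `Vₙ₊₁` is in the first
resonance variety of `PΣₙ₊₁⁺`. -/
theorem R1_restriction (n : ℕ) (hn : 3 ≤ n) :
    ∀ a : Vn n, a ∈ R1 n ↔ inclV n a ∈ R1 (n + 1) := by
  intro a
  refine ⟨inclV_mem_R1, fun ⟨b, hb, hab⟩ => ?_⟩
  by_cases hres : restrV n b ∈ span ℂ {a}
  · obtain ⟨q, hq, hbq⟩ := exists_fst_eq_last_apply_ne_zero hres hb
    rw [eq_zero_of_wedge_inclV_mem hab hq hbq]
    exact zero_mem_R1 (by omega)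
  · exact ⟨restrV n b, hres, wedge_restrV_mem_ResRel hab⟩
end

section
/- For every d ≥ 2 and all pairs (i,j) with d+1 ≤ j < i ≤ n, the basis vector u_{ij} (and hence every vector of the one-dimensional subspace L'_{ij} = ℂ·u_{ij}) belongs to the depth-d resonance variety R_d = { a ∈ V : there exists a linear subspace W ⊆ V with dim_ℂ W = d, a ∉ W, and a ∧ b ∈ R for all b ∈ W }. -/
/-- The depth-`d` resonance variety
`R_d = { a ∈ V : ∃ W ⊆ V, dim W = d, a ∉ W, a ∧ b ∈ R for all b ∈ W }`. -/
noncomputable def Rd (n d : ℕ) : Set (Vn n) :=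
  { a | ∃ W : Submodule ℂ (Vn n), Module.finrank ℂ W = d ∧ a ∉ W ∧
      ∀ b ∈ W, wedge n a b ∈ ResRel n }

/-!
The relations `u_{ij} ∧ (u_{ik} − u_{jk})`, `k < j`, are themselves generators of `R`, so
`W = span {u_{ik} − u_{jk} : k < d}` works for `a = u_{ij}` once `d ≤ j`. These vectors are
independent, as their `(i,k)`-coordinates form the standard basis, and all vanish at the
coordinate `(i,j)`, where `u_{ij}` does not.
-/

section

variable {n : ℕ}

noncomputable def uDiff {i j : Fin n} (hji : j < i) (k : {k : Fin n // k < j}) : Vn n :=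
  u n i k (k.2.trans hji) - u n j k k.2

theorem uDiff_apply_left {i j : Fin n} (hji : j < i) (k m : {k : Fin n // k < j}) :
    uDiff hji m ⟨(i, k), k.2.trans hji⟩ = if k = m then 1 else 0 := by
  have hij : i ≠ j := hji.ne'
  simp [uDiff, u, Pi.single_apply, hij, Subtype.ext_iff]

theorem uDiff_apply_self {i j : Fin n} (hji : j < i) (k : {k : Fin n // k < j}) :
    uDiff hji k ⟨(i, j), hji⟩ = 0 := by
  simp [uDiff, u, k.2.ne', hji.ne']

theorem linearIndependent_uDiff {i j : Fin n} (hji : j < i) :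
    LinearIndependent ℂ (uDiff hji) := by
  let restrict : Vn n →ₗ[ℂ] ({k : Fin n // k < j} → ℂ) :=
    LinearMap.funLeft ℂ ℂ fun k => ⟨(i, k), k.2.trans hji⟩
  have : restrict ∘ uDiff hji = Pi.basisFun ℂ _ := by
    ext m k
    simp [restrict, LinearMap.funLeft_apply, uDiff_apply_left, Pi.single_apply]
  exact LinearIndependent.of_comp restrict (this ▸ (Pi.basisFun ℂ _).linearIndependent)

theorem wedge_smul_left (a b : Vn n) (c : ℂ) : wedge n (c • a) b = c • wedge n a b := by
  rw [wedge, map_smul, smul_mul_assoc, wedge]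

theorem wedge_u_uDiff_mem_ResRel {i j : Fin n} (hji : j < i) (k : {k : Fin n // k < j}) :
    wedge n (u n i j hji) (uDiff hji k) ∈ ResRel n :=
  Submodule.subset_span ⟨i, j, k, k.2, hji, rfl⟩

theorem mem_Rd_of_linearIndependent {d : ℕ} {a : Vn n} {v : Fin d → Vn n}
    (hv : LinearIndependent ℂ v) (ha : a ∉ Submodule.span ℂ (Set.range v))
    (hR : ∀ k, wedge n a (v k) ∈ ResRel n) : a ∈ Rd n d := by
  let wedgeLeft : Vn n →ₗ[ℂ] ExteriorAlgebra ℂ (Vn n) :=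
    (LinearMap.mulLeft ℂ (ExteriorAlgebra.ι ℂ a)).comp (ExteriorAlgebra.ι ℂ)
  have hle : Submodule.span ℂ (Set.range v) ≤ (ResRel n).comap wedgeLeft := by
    rw [Submodule.span_le]
    rintro _ ⟨k, rfl⟩
    exact hR k
  refine ⟨Submodule.span ℂ (Set.range v), ?_, ha, fun b hb => hle hb⟩
  rw [finrank_span_eq_card hv, Fintype.card_fin]

theorem smul_u_mem_Rd {d : ℕ} {i j : Fin n} (hji : j < i) (hj : d ≤ j.val) {c : ℂ}
    (hc : c ≠ 0) : c • u n i j hji ∈ Rd n d := by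
  let e : Fin d ↪ {k : Fin n // k < j} :=
    ⟨fun m => ⟨⟨m, m.2.trans_le (hj.trans j.2.le)⟩, m.2.trans_le hj⟩, fun m m' h => by
      simpa [Fin.ext_iff] using h⟩
  refine mem_Rd_of_linearIndependent ((linearIndependent_uDiff hji).comp e e.injective)
    ?_ fun k => ?_
  · have hker : Submodule.span ℂ (Set.range (uDiff hji ∘ e)) ≤
        LinearMap.ker (LinearMap.proj (R := ℂ) (⟨(i, j), hji⟩ : RIdx n)) := by
      rw [Submodule.span_le]
      rintro _ ⟨k, rfl⟩
      exact uDiff_apply_self hji (e k)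
    intro hmem
    simpa [u, hc] using hker hmem
  · rw [wedge_smul_left]
    exact Submodule.smul_mem _ c (wedge_u_uDiff_mem_ResRel hji (e k))

end

theorem u_mem_Rd_general (n d : ℕ) (i j : Fin n) (hji : j < i)
    (hj : d ≤ j.val) :
    u n i j hji ∈ Rd n d ∧ ∀ c : ℂ, c ≠ 0 → c • u n i j hji ∈ Rd n d :=
  ⟨one_smul ℂ (u n i j hji) ▸ smul_u_mem_Rd hji hj one_ne_zero,
    fun _ hc => smul_u_mem_Rd hji hj hc⟩

/-- For every `d ≥ 2` and all pairs `(i,j)` with `d+1 ≤ j < i ≤ n` (`0`-indexed: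
`d ≤ j.val`), the basis vector `u_{ij}`—and hence every nonzero vector of the line
`L'_{ij} = ℂ·u_{ij}`—belongs to the depth-`d` resonance variety `R_d`. -/
theorem u_mem_Rd (n d : ℕ) (hn : 3 ≤ n) (hd : 2 ≤ d) (i j : Fin n) (hji : j < i)
    (hj : d ≤ j.val) :
    u n i j hji ∈ Rd n d ∧ ∀ c : ℂ, c ≠ 0 → c • u n i j hji ∈ Rd n d :=
  u_mem_Rd_general n d i j hji hj
end
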